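/- Under the Entropy Setup, there exists a constant M > 0 depending only on γ such that for all ρ > 0 and m ∈ ℝ with u = m/ρ, |η̌_m(ρ,m)| ≤ M(|u| + ρ^θ) and |η̌_ρ(ρ,m)| ≤ M(|u|² + ρ^{2θ}). -/

import Mathlib

open MeasureTheory Real Set

noncomputable section

/-- The Lions–Perthame–Tadmor weak entropy
`η̌(ρ,m) = ∫_ℝ ½ s|s| [ρ^{2θ} − (m/ρ−s)²]_+^{(3−γ)/(2(γ−1))} ds`, with `2θ = γ−1`. -/
def etaCheck (γ ρ m : ℝ) : ℝ :=
  ∫ s : ℝ, (1/2) * s * |s| *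
    (max (ρ ^ (γ - 1) - (m / ρ - s) ^ (2:ℕ)) 0) ^ ((3 - γ) / (2 * (γ - 1)))

/-- The associated weak entropy flux
`q̌(ρ,m) = ∫_ℝ ½ s|s| (θs + (1−θ)m/ρ) [ρ^{2θ} − (m/ρ−s)²]_+^{(3−γ)/(2(γ−1))} ds`. -/
def qCheck (γ ρ m : ℝ) : ℝ :=
  ∫ s : ℝ, (1/2) * s * |s| * (((γ - 1)/2) * s + (1 - (γ - 1)/2) * (m / ρ)) *
    (max (ρ ^ (γ - 1) - (m / ρ - s) ^ (2:ℕ)) 0) ^ ((3 - γ) / (2 * (γ - 1)))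

/-- Partial derivative `η̌_ρ` in the variables `(ρ,m)`. -/
def etaCheckRho (γ ρ m : ℝ) : ℝ := deriv (fun x => etaCheck γ x m) ρ

/-- Partial derivative `η̌_m` in the variables `(ρ,m)`. -/
def etaCheckM (γ ρ m : ℝ) : ℝ := deriv (fun y => etaCheck γ ρ y) m

/-- The modified entropy `η̃(ρ,m) = η̌(ρ,m) − η̌_ρ(ρ̄,0)(ρ−ρ̄) − η̌_m(ρ̄,0)m`. -/
def etaTilde (γ ρbar ρ m : ℝ) : ℝ :=
  etaCheck γ ρ m - etaCheckRho γ ρbar 0 * (ρ - ρbar) - etaCheckM γ ρbar 0 * m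

/-- The modified entropy flux
`q̃(ρ,m) = q̌(ρ,m) − η̌_ρ(ρ̄,0)m − η̌_m(ρ̄,0)(m²/ρ + p(ρ))`, `p(ρ) = κρ^γ`. -/
def qTilde (γ κ ρbar ρ m : ℝ) : ℝ :=
  qCheck γ ρ m - etaCheckRho γ ρbar 0 * m
    - etaCheckM γ ρbar 0 * (m ^ (2:ℕ) / ρ + κ * ρ ^ γ)

/-- `η̃_ρ` in the variables `(ρ,m)`. -/
def etaTildeRho (γ ρbar ρ m : ℝ) : ℝ := deriv (fun x => etaTilde γ ρbar x m) ρ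

/-- `η̃_m` in the variables `(ρ,m)`. -/
def etaTildeM (γ ρbar ρ m : ℝ) : ℝ := deriv (fun y => etaTilde γ ρbar ρ y) m

/-!
The substitution `s = u - ρ^θ t` gives `η̌(ρ,m) = ρ^γ G(v)` with `u = m/ρ`, `v = u/ρ^θ`, where
`G = (½ t|t|) ∗ K` is a convolution with the kernel `K(t) = [1 - t²]_+^λ`, `λ = (3-γ)/(2(γ-1))`.
Since `λ > -1`, `K` is integrable, and it is supported in `[-1,1]`; hence `G` is differentiable
with `G' = |·| ∗ K`, `|G(v)| ≤ (|v|+1)² ‖K‖₁` and `|G'(v)| ≤ (|v|+1) ‖K‖₁`. By the chain rule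
`η̌_m = ρ^θ G'(v)` and `η̌_ρ = γ ρ^{2θ} G(v) - (γ+1)/2 · u ρ^θ G'(v)`, and the identity
`ρ^θ (|v|+1) = |u| + ρ^θ` turns the bounds on `G` and `G'` into the claimed ones.
-/

namespace LPTEntropy

theorem hasDerivAt_half_mul_self_mul_abs (x : ℝ) :
    HasDerivAt (fun y : ℝ => 1 / 2 * y * |y|) |x| x := by
  refine hasDerivAt_of_hasDerivAt_of_ne' (x := 0) (fun y hy => ?_)
    (Continuous.continuousAt (by fun_prop)) continuous_abs.continuousAt x
  refine (((hasDerivAt_id' y).const_mul (1 / 2 : ℝ)).fun_mul (hasDerivAt_abs hy)).congr_deriv ?_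
  rw [mul_assoc _ y, self_mul_sign]
  ring

section Potential

variable {K : ℝ → ℝ}

def potential (K : ℝ → ℝ) (v : ℝ) : ℝ := ∫ t, 1 / 2 * (v - t) * |v - t| * K t

def potentialDeriv (K : ℝ → ℝ) (v : ℝ) : ℝ := ∫ t, |v - t| * K t

theorem abs_sub_pow_mul_abs_le (hK : ∀ t, 1 < |t| → K t = 0) (x t : ℝ) (n : ℕ) :
    |x - t| ^ n * |K t| ≤ (|x| + 1) ^ n * |K t| := by
  by_cases ht : 1 < |t|
  · simp [hK t ht]
  · have : |x - t| ≤ |x| + 1 := (abs_sub _ _).trans (by linarith)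
    gcongr

theorem norm_potential_integrand_le (hK : ∀ t, 1 < |t| → K t = 0) (v t : ℝ) :
    ‖1 / 2 * (v - t) * |v - t| * K t‖ ≤ (|v| + 1) ^ 2 * |K t| := by
  calc ‖1 / 2 * (v - t) * |v - t| * K t‖ = 1 / 2 * (|v - t| ^ 2 * |K t|) := by
        simp only [norm_mul, norm_div, norm_one, Real.norm_ofNat, Real.norm_eq_abs, abs_abs]
        ring
    _ ≤ 1 / 2 * ((|v| + 1) ^ 2 * |K t|) :=
      mul_le_mul_of_nonneg_left (abs_sub_pow_mul_abs_le hK v t 2) (by norm_num)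
    _ ≤ (|v| + 1) ^ 2 * |K t| := by linarith [show 0 ≤ (|v| + 1) ^ 2 * |K t| by positivity]

theorem norm_potentialDeriv_integrand_le (hK : ∀ t, 1 < |t| → K t = 0) (v t : ℝ) :
    ‖|v - t| * K t‖ ≤ (|v| + 1) * |K t| := by
  simpa [abs_mul] using abs_sub_pow_mul_abs_le hK v t 1

variable (hKi : Integrable K) (hK : ∀ t, 1 < |t| → K t = 0)
include hKi hK

theorem abs_potential_le (v : ℝ) : |potential K v| ≤ (|v| + 1) ^ 2 * ∫ t, |K t| := by
  rw [← integral_const_mul]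
  exact norm_integral_le_of_norm_le (hKi.abs.const_mul _)
    (.of_forall (norm_potential_integrand_le hK v))

theorem abs_potentialDeriv_le (v : ℝ) : |potentialDeriv K v| ≤ (|v| + 1) * ∫ t, |K t| := by
  rw [← integral_const_mul]
  exact norm_integral_le_of_norm_le (hKi.abs.const_mul _)
    (.of_forall (norm_potentialDeriv_integrand_le hK v))

theorem hasDerivAt_potential (v₀ : ℝ) : HasDerivAt (potential K) (potentialDeriv K v₀) v₀ := by
  have meas (f : ℝ → ℝ) (hf : Continuous f) : AEStronglyMeasurable (fun t => f t * K t) :=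
    hf.aestronglyMeasurable.mul hKi.aestronglyMeasurable
  refine (hasDerivAt_integral_of_dominated_loc_of_deriv_le
    (F := fun v t => 1 / 2 * (v - t) * |v - t| * K t) (F' := fun v t => |v - t| * K t)
    (bound := fun t => (|v₀| + 2) * |K t|) (Metric.ball_mem_nhds v₀ one_pos)
    (.of_forall fun v => meas (fun t => 1 / 2 * (v - t) * |v - t|) (by fun_prop))
    ((hKi.abs.const_mul _).mono' (meas (fun t => 1 / 2 * (v₀ - t) * |v₀ - t|) (by fun_prop))
      (.of_forall (norm_potential_integrand_le hK v₀)))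
    (meas (fun t => |v₀ - t|) (by fun_prop)) (.of_forall fun t v hv => ?_) (hKi.abs.const_mul _)
    (.of_forall fun t v _ => ?_)).2
  · have hv_le : |v| ≤ |v₀| + 1 := by
      have := abs_sub_abs_le_abs_sub v v₀
      rw [Metric.mem_ball, Real.dist_eq] at hv
      linarith
    exact (norm_potentialDeriv_integrand_le hK v t).trans
      (mul_le_mul_of_nonneg_right (by linarith) (abs_nonneg _))
  · simpa [Function.comp_def] using ((hasDerivAt_half_mul_self_mul_abs (v - t)).comp v
      ((hasDerivAt_id v).sub_const t)).mul_const (K t)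

theorem mul_abs_potentialDeriv_div_le {c : ℝ} (hc : 0 < c) (u : ℝ) :
    c * |potentialDeriv K (u / c)| ≤ (|u| + c) * ∫ t, |K t| := by
  have h : c * (|u / c| + 1) = |u| + c := by
    rw [abs_div, abs_of_pos hc]
    field_simp
  rw [← h, mul_assoc]
  exact mul_le_mul_of_nonneg_left (abs_potentialDeriv_le hKi hK _) hc.le

theorem sq_mul_abs_potential_div_le {c : ℝ} (hc : 0 < c) (u : ℝ) :
    c ^ 2 * |potential K (u / c)| ≤ (|u| + c) ^ 2 * ∫ t, |K t| := by
  have h : c * (|u / c| + 1) = |u| + c := by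
    rw [abs_div, abs_of_pos hc]
    field_simp
  rw [← h, mul_pow, mul_assoc]
  exact mul_le_mul_of_nonneg_left (abs_potential_le hKi hK _) (by positivity)

end Potential

def lptKernel (α t : ℝ) : ℝ := max (1 - t ^ 2) 0 ^ α

theorem lptKernel_nonneg (α t : ℝ) : 0 ≤ lptKernel α t := rpow_nonneg (le_max_right _ _) _

theorem lptKernel_eq_zero {α : ℝ} (hα : α ≠ 0) {t : ℝ} (ht : 1 < |t|) : lptKernel α t = 0 := by
  have : 1 < t ^ 2 := by nlinarith [sq_abs t, abs_nonneg t]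
  rw [lptKernel, max_eq_right (by linarith), zero_rpow hα]

theorem lptKernel_le_add {α t : ℝ} (ht : t ∈ Ioo (-1 : ℝ) 1) :
    lptKernel α t ≤ (1 - t) ^ α + (t + 1) ^ α := by
  obtain ⟨ht₁, ht₂⟩ := ht
  have hprod : lptKernel α t = (1 - t) ^ α * (t + 1) ^ α := by
    rw [lptKernel, max_eq_left (by nlinarith), ← mul_rpow (by linarith) (by linarith)]
    ring_nf
  have h_one : (1 - t) ^ α ≤ 1 ∨ (t + 1) ^ α ≤ 1 := by
    rcases le_total 0 α with hα | hα <;> rcases le_total t 0 with ht | ht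
    · exact .inr (rpow_le_one (by linarith) (by linarith) hα)
    · exact .inl (rpow_le_one (by linarith) (by linarith) hα)
    · exact .inl (rpow_le_one_of_one_le_of_nonpos (by linarith) hα)
    · exact .inr (rpow_le_one_of_one_le_of_nonpos (by linarith) hα)
  have h₁ : 0 ≤ (1 - t) ^ α := rpow_nonneg (by linarith) α
  have h₂ : 0 ≤ (t + 1) ^ α := rpow_nonneg (by linarith) α
  rw [hprod]
  rcases h_one with h | h <;> nlinarith

theorem integrable_lptKernel {α : ℝ} (hα : -1 < α) (hα0 : α ≠ 0) : Integrable (lptKernel α) := by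
  have hpow : IntervalIntegrable (fun x : ℝ => x ^ α) volume 0 2 :=
    intervalIntegral.intervalIntegrable_rpow' hα
  have hsub : IntegrableOn (fun t : ℝ => (1 - t) ^ α) (Ioo (-1) 1) := by
    have := (hpow.comp_sub_left 1).symm
    norm_num at this
    exact (intervalIntegrable_iff_integrableOn_Ioo_of_le (by norm_num)).1 this
  have hadd : IntegrableOn (fun t : ℝ => (t + 1) ^ α) (Ioo (-1) 1) := by
    have := hpow.comp_add_right 1
    norm_num at this
    exact (intervalIntegrable_iff_integrableOn_Ioo_of_le (by norm_num)).1 this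
  have hmeas : Measurable (lptKernel α) := by unfold lptKernel; fun_prop
  have hIoo : IntegrableOn (lptKernel α) (Ioo (-1) 1) :=
    (hsub.add hadd).mono' hmeas.aestronglyMeasurable.restrict
      ((ae_restrict_iff' measurableSet_Ioo).2 (.of_forall fun t ht => by
        rw [Real.norm_of_nonneg (lptKernel_nonneg α t)]
        exact lptKernel_le_add ht))
  refine ((integrableOn_Icc_iff_integrableOn_Ioo (a := -1) (b := 1)).2 hIoo
    ).integrable_of_forall_notMem_eq_zero fun t ht => lptKernel_eq_zero hα0 ?_
  rw [mem_Icc, not_and_or, not_le, not_le] at ht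
  rcases ht with ht | ht
  · rw [abs_of_neg (by linarith)]; linarith
  · rw [abs_of_pos (by linarith)]; exact ht

theorem integral_half_mul_self_mul_abs_mul_rpow {c : ℝ} (hc : 0 < c) (u α : ℝ) :
    ∫ s, 1 / 2 * s * |s| * max (c ^ 2 - (u - s) ^ 2) 0 ^ α
      = c ^ 3 * (c ^ 2) ^ α * potential (lptKernel α) (u / c) := by
  set f : ℝ → ℝ := fun s => 1 / 2 * s * |s| * max (c ^ 2 - (u - s) ^ 2) 0 ^ α
  have hsubst : ∫ s, f s = c * ∫ t, f (u - c * t) := by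
    rw [Measure.integral_comp_mul_left (fun x => f (u - x)), integral_sub_left_eq_self,
      abs_inv, abs_of_pos hc, smul_eq_mul, mul_inv_cancel_left₀ hc.ne']
  have hpt (t : ℝ) : f (u - c * t)
      = c ^ 2 * (c ^ 2) ^ α * (1 / 2 * (u / c - t) * |u / c - t| * lptKernel α t) := by
    have hs : u - c * t = c * (u / c - t) := by field_simp
    have hmax : max (c ^ 2 - (u - (u - c * t)) ^ 2) 0 = c ^ 2 * max (1 - t ^ 2) 0 := by
      rw [mul_max_of_nonneg _ _ (by positivity), mul_zero]
      ring_nf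
    simp only [f, lptKernel]
    rw [hmax, mul_rpow (by positivity) (le_max_right _ _), hs, abs_mul, abs_of_pos hc]
    ring
  simp only [hsubst, hpt, integral_const_mul, potential]
  ring

theorem rpow_eq_rpow_half_sq {x : ℝ} (hx : 0 ≤ x) (a : ℝ) : x ^ a = (x ^ (a / 2)) ^ 2 := by
  rw [← rpow_natCast, ← rpow_mul hx]
  norm_num

theorem div_div_rpow_eq_mul_rpow_neg {x : ℝ} (hx : 0 < x) (m a : ℝ) :
    m / x / x ^ a = m * x ^ (-(a + 1)) := by
  rw [rpow_neg hx.le, add_comm, rpow_add hx, rpow_one]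
  field_simp

def lptExponent (γ : ℝ) : ℝ := (3 - γ) / (2 * (γ - 1))

section Entropy

variable {γ : ℝ}

local notation "Kγ" => lptKernel (lptExponent γ)

theorem neg_one_lt_lptExponent (hγ : 1 < γ) : -1 < lptExponent γ := by
  rw [lptExponent, lt_div_iff₀ (by linarith)]
  linarith

theorem lptExponent_ne_zero (hγ : 1 < γ) (hγ3 : γ ≠ 3) : lptExponent γ ≠ 0 :=
  div_ne_zero (sub_ne_zero.2 (Ne.symm hγ3)) (by linarith)

theorem lptKernel_lptExponent_eq_zero (hγ : 1 < γ) (hγ3 : γ ≠ 3) (t : ℝ) (ht : 1 < |t|) :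
    Kγ t = 0 :=
  lptKernel_eq_zero (lptExponent_ne_zero hγ hγ3) ht

theorem integrable_lptKernel_lptExponent (hγ : 1 < γ) (hγ3 : γ ≠ 3) : Integrable Kγ :=
  integrable_lptKernel (neg_one_lt_lptExponent hγ) (lptExponent_ne_zero hγ hγ3)

theorem etaCheck_eq_rpow_mul_potential (hγ : 1 < γ) {ρ : ℝ} (hρ : 0 < ρ) (m : ℝ) :
    etaCheck γ ρ m = ρ ^ γ * potential Kγ (m / ρ / ρ ^ ((γ - 1) / 2)) := by
  rw [etaCheck, rpow_eq_rpow_half_sq hρ.le (γ - 1),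
    integral_half_mul_self_mul_abs_mul_rpow (rpow_pos_of_pos hρ _)]
  congr 1
  rw [← rpow_natCast, ← rpow_natCast, ← rpow_mul hρ.le, ← rpow_mul hρ.le, ← rpow_mul hρ.le,
    ← rpow_add hρ]
  have : γ - 1 ≠ 0 := by linarith
  congr 1
  field_simp
  ring

theorem etaCheckM_eq (hγ : 1 < γ) (hγ3 : γ ≠ 3) {ρ : ℝ} (hρ : 0 < ρ) (m : ℝ) :
    etaCheckM γ ρ m = ρ ^ ((γ - 1) / 2) * potentialDeriv Kγ (m / ρ / ρ ^ ((γ - 1) / 2)) := by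
  set c := ρ ^ ((γ - 1) / 2)
  have hc : 0 < c := rpow_pos_of_pos hρ _
  have hρc : ρ ^ γ = ρ * c ^ 2 := by
    rw [← rpow_eq_rpow_half_sq hρ.le, mul_comm, ← rpow_add_one hρ.ne', sub_add_cancel]
  have hderiv : HasDerivAt (fun y => ρ ^ γ * potential Kγ (y / ρ / c))
      (ρ ^ γ * (potentialDeriv Kγ (m / ρ / c) * (1 / ρ / c))) m :=
    ((hasDerivAt_potential (integrable_lptKernel_lptExponent hγ hγ3)
      (lptKernel_lptExponent_eq_zero hγ hγ3) (m / ρ / c)).comp m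
      (((hasDerivAt_id' m).div_const ρ).div_const c)).const_mul (ρ ^ γ)
  rw [etaCheckM, funext (etaCheck_eq_rpow_mul_potential hγ hρ), hderiv.deriv, hρc]
  field_simp

theorem etaCheckRho_eq (hγ : 1 < γ) (hγ3 : γ ≠ 3) {ρ : ℝ} (hρ : 0 < ρ) (m : ℝ) :
    etaCheckRho γ ρ m = γ * ρ ^ (γ - 1) * potential Kγ (m / ρ / ρ ^ ((γ - 1) / 2))
      - (γ + 1) / 2 * (m / ρ) * ρ ^ ((γ - 1) / 2)
        * potentialDeriv Kγ (m / ρ / ρ ^ ((γ - 1) / 2)) := by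
  have hev : (fun x => etaCheck γ x m)
      =ᶠ[nhds ρ] fun x => x ^ γ * potential Kγ (m * x ^ (-((γ - 1) / 2 + 1))) := by
    filter_upwards [eventually_gt_nhds hρ] with x hx
    rw [etaCheck_eq_rpow_mul_potential hγ hx, div_div_rpow_eq_mul_rpow_neg hx]
  have hderiv := (hasDerivAt_rpow_const (p := γ) (Or.inl hρ.ne')).fun_mul
    ((hasDerivAt_potential (integrable_lptKernel_lptExponent hγ hγ3)
      (lptKernel_lptExponent_eq_zero hγ hγ3) _).comp ρ
      ((hasDerivAt_rpow_const (p := -((γ - 1) / 2 + 1)) (Or.inl hρ.ne')).const_mul m))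
  have hpow : ρ ^ γ * ρ ^ (-((γ - 1) / 2 + 1) - 1) = ρ ^ ((γ - 1) / 2) / ρ := by
    rw [← rpow_add hρ, ← rpow_sub_one hρ.ne']
    ring_nf
  simp only [Function.comp_def] at hderiv
  rw [etaCheckRho, hev.deriv_eq, hderiv.deriv, ← div_div_rpow_eq_mul_rpow_neg hρ]
  linear_combination
    (-((γ - 1) / 2 + 1) * m * potentialDeriv Kγ (m / ρ / ρ ^ ((γ - 1) / 2))) * hpow

theorem abs_etaCheckM_le (hγ : 1 < γ) (hγ3 : γ ≠ 3) {ρ : ℝ} (hρ : 0 < ρ) (m : ℝ) :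
    |etaCheckM γ ρ m| ≤ (∫ t, |Kγ t|) * (|m / ρ| + ρ ^ ((γ - 1) / 2)) := by
  rw [etaCheckM_eq hγ hγ3 hρ, abs_mul, abs_of_pos (rpow_pos_of_pos hρ _), mul_comm (∫ t, _)]
  exact mul_abs_potentialDeriv_div_le (integrable_lptKernel_lptExponent hγ hγ3)
    (lptKernel_lptExponent_eq_zero hγ hγ3) (rpow_pos_of_pos hρ _) _

theorem abs_etaCheckRho_le (hγ : 1 < γ) (hγ3 : γ ≠ 3) {ρ : ℝ} (hρ : 0 < ρ) (m : ℝ) :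
    |etaCheckRho γ ρ m| ≤ 4 * γ * (∫ t, |Kγ t|) * (|m / ρ| ^ 2 + ρ ^ (γ - 1)) := by
  have hc : 0 < ρ ^ ((γ - 1) / 2) := rpow_pos_of_pos hρ _
  have hG := sq_mul_abs_potential_div_le (integrable_lptKernel_lptExponent hγ hγ3)
    (lptKernel_lptExponent_eq_zero hγ hγ3) hc (m / ρ)
  have hG' := mul_abs_potentialDeriv_div_le (integrable_lptKernel_lptExponent hγ hγ3)
    (lptKernel_lptExponent_eq_zero hγ hγ3) hc (m / ρ)
  rw [etaCheckRho_eq hγ hγ3 hρ, rpow_eq_rpow_half_sq hρ.le (γ - 1)]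
  set c := ρ ^ ((γ - 1) / 2)
  set X := |m / ρ|
  set C := ∫ t, |Kγ t|
  have hX : 0 ≤ X := abs_nonneg _
  have hC : 0 ≤ C := integral_nonneg fun _ => abs_nonneg _
  have hquad : γ * (X + c) ^ 2 + (γ + 1) / 2 * X * (X + c) ≤ 4 * γ * (X ^ 2 + c ^ 2) := by
    nlinarith [sq_nonneg (X - c), mul_nonneg hX hc.le, mul_nonneg (sub_nonneg.2 hγ.le) hX]
  calc _ ≤ γ * (c ^ 2 * |potential Kγ (m / ρ / c)|)
        + (γ + 1) / 2 * X * (c * |potentialDeriv Kγ (m / ρ / c)|) := by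
        refine (abs_sub _ _).trans (le_of_eq ?_)
        simp only [abs_mul, abs_of_pos hc, abs_of_pos (by linarith : (0 : ℝ) < γ),
          abs_of_pos (by linarith : (0 : ℝ) < (γ + 1) / 2), abs_pow, X]
        ring
    _ ≤ γ * ((X + c) ^ 2 * C) + (γ + 1) / 2 * X * ((X + c) * C) := by gcongr
    _ ≤ 4 * γ * C * (X ^ 2 + c ^ 2) := by nlinarith [mul_le_mul_of_nonneg_right hquad hC]

end Entropy

/-- At `γ = 3` the exponent vanishes and `0 ^ 0 = 1`, so the integrand is `s|s|/2`, which is not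
integrable; the Bochner integral then takes its junk value `0`. -/
theorem etaCheck_three (ρ m : ℝ) : etaCheck 3 ρ m = 0 := by
  have hnot : ¬ Integrable fun s : ℝ => 1 / 2 * s * |s| := fun h => by
    refine (h.measure_norm_ge_lt_top (ε := 1 / 2) (by norm_num)).ne
      (measure_mono_top (fun s (hs : 1 ≤ s) => ?_) Real.volume_Ici)
    simp only [mem_ofPred_eq, norm_mul, Real.norm_eq_abs, abs_abs,
      abs_of_pos (by linarith : 0 < s)]
    norm_num
    nlinarith
  norm_num [etaCheck]
  exact integral_undef hnot

end LPTEntropy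

open LPTEntropy

/-- there is `M > 0` depending only on `γ` with
`|η̌_m| ≤ M(|u| + ρ^θ)` and `|η̌_ρ| ≤ M(|u|² + ρ^{2θ})`, where `u = m/ρ`, `θ = (γ−1)/2`. -/
theorem etaCheck_derivative_bounds (γ : ℝ) (hγ : 1 < γ) :
    ∃ M : ℝ, 0 < M ∧ ∀ ρ : ℝ, 0 < ρ → ∀ m : ℝ,
      |etaCheckM γ ρ m| ≤ M * (|m / ρ| + ρ ^ ((γ - 1) / 2)) ∧
      |etaCheckRho γ ρ m| ≤ M * (|m / ρ| ^ (2:ℕ) + ρ ^ (γ - 1)) := by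
  rcases eq_or_ne γ 3 with rfl | hγ3
  · refine ⟨1, one_pos, fun ρ _ m => ?_⟩
    simp only [etaCheckM, etaCheckRho, etaCheck_three, deriv_const', abs_zero]
    constructor <;> positivity
  set C := ∫ t, |lptKernel (lptExponent γ) t|
  have hC : 0 ≤ C := integral_nonneg fun _ => abs_nonneg _
  refine ⟨4 * γ * C + 1, by positivity, fun ρ hρ m => ⟨?_, ?_⟩⟩
  · exact (abs_etaCheckM_le hγ hγ3 hρ m).trans (by gcongr; nlinarith)
  · exact (abs_etaCheckRho_le hγ hγ3 hρ m).trans (by gcongr; linarith)
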